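/- arXiv:2409.16811 — 6 statements merged into one kernel-verified Lean document; each statement's English description precedes it below -/
import Mathlib

section
/- Let b > 0, Ω > 0 and let m be a positive integer; set α = (1/(2b))·(2bm/(2bm+Ω))^m, β = 1/(2b) and δ = Ω/(2b(2bm+Ω)). Then ∫₀^∞ α e^{−βx} Σ_{i=0}^∞ (m)_i (δx)^i/(i!)² dx = 1, i.e., the shadowed-Rician density integrates to one. -/
/-!
Integrating term by term against `e^{-βx}` (justified by absolute summability of the Gamma
integrals `∫₀^∞ xⁱ e^{-βx} dx = i!/β^{i+1}`) turns the density into `α/β` times the negative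
binomial series `Σ (m)ᵢ/i! · (δ/β)ⁱ = (1 - δ/β)^{-m}`. The parameters are tuned so that
`β - δ = β · 2bm/(2bm+Ω)`, whence `α/β · (β/(β-δ))^m = 1`.
-/

open MeasureTheory

/-- Rising factorial (Pochhammer symbol) with real base: `(a)_n = a (a+1) ⋯ (a+n-1)`. -/
noncomputable def rf (a : ℝ) : ℕ → ℝ
  | 0 => 1
  | n + 1 => rf a n * (a + n)

open Real Set

lemma rf_natCast (m n : ℕ) : rf m n = m.ascFactorial n := by
  induction n with
  | zero => simp [rf]
  | succ n ih => rw [rf, ih, Nat.ascFactorial_succ]; push_cast; ring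

lemma hasSum_ascFactorial_div_factorial_mul_geometric (m : ℕ) {r : ℝ} (hr : ‖r‖ < 1) :
    HasSum (fun n ↦ m.ascFactorial n / n.factorial * r ^ n) (1 / (1 - r) ^ m) := by
  cases m with
  | zero =>
    convert hasSum_single 0 fun n hn ↦ ?_
    · simp
    · obtain ⟨n, rfl⟩ := Nat.exists_eq_succ_of_ne_zero hn
      simp [Nat.zero_ascFactorial]
  | succ k =>
    have hterm (n : ℕ) : ((k + 1).ascFactorial n / n.factorial * r ^ n : ℝ) =
        (n + k).choose k * r ^ n := by
      rw [Nat.ascFactorial_eq_factorial_mul_choose, add_comm k n, Nat.choose_symm_add]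
      push_cast
      field_simp
    simpa only [hterm] using hasSum_choose_mul_geometric_of_norm_lt_one k hr

lemma integral_pow_mul_exp_neg_mul_Ioi {β : ℝ} (hβ : 0 < β) (n : ℕ) :
    ∫ x in Ioi (0 : ℝ), x ^ n * exp (-β * x) = n.factorial / β ^ (n + 1) := by
  have h := integral_rpow_mul_exp_neg_mul_Ioi (a := n + 1) (by positivity) hβ
  simp_rw [add_sub_cancel_right, rpow_natCast, Gamma_nat_eq_factorial, ← neg_mul] at h
  rw [h, one_div, inv_rpow hβ.le, ← rpow_natCast, Nat.cast_add_one]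
  ring

lemma integrableOn_pow_mul_exp_neg_mul_Ioi {β : ℝ} (hβ : 0 < β) (n : ℕ) :
    IntegrableOn (fun x ↦ x ^ n * exp (-β * x)) (Ioi 0) :=
  .of_integral_ne_zero (by rw [integral_pow_mul_exp_neg_mul_Ioi hβ]; positivity)

lemma integral_exp_neg_mul_mul_tsum {β : ℝ} (hβ : 0 < β) {c : ℕ → ℝ}
    (hc : Summable fun n ↦ |c n| / β ^ (n + 1)) :
    ∫ x in Ioi (0 : ℝ), exp (-β * x) * ∑' n, c n * x ^ n / n.factorial =
      ∑' n, c n / β ^ (n + 1) := by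
  have hterm (a : ℕ → ℝ) (n : ℕ) :
      ∫ x in Ioi (0 : ℝ), a n / n.factorial * (x ^ n * exp (-β * x)) = a n / β ^ (n + 1) := by
    rw [integral_const_mul, integral_pow_mul_exp_neg_mul_Ioi hβ]
    field_simp
  have hnorm (n : ℕ) : ∫ x in Ioi (0 : ℝ), ‖c n / n.factorial * (x ^ n * exp (-β * x))‖ =
      |c n| / β ^ (n + 1) := by
    rw [← hterm (|c ·|)]
    refine setIntegral_congr_fun measurableSet_Ioi fun x (hx : 0 < x) ↦ ?_
    rw [norm_mul, norm_div, norm_of_nonneg (by positivity : 0 ≤ x ^ n * exp (-β * x))]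
    simp
  calc ∫ x in Ioi (0 : ℝ), exp (-β * x) * ∑' n, c n * x ^ n / n.factorial
      = ∫ x in Ioi (0 : ℝ), ∑' n, c n / n.factorial * (x ^ n * exp (-β * x)) := by
        congr 1 with x
        rw [← tsum_mul_left]
        congr 1 with n
        ring
    _ = ∑' n, ∫ x in Ioi (0 : ℝ), c n / n.factorial * (x ^ n * exp (-β * x)) :=
        (integral_tsum_of_summable_integral_norm
          (fun n ↦ (integrableOn_pow_mul_exp_neg_mul_Ioi hβ n).const_mul _)
          (by simpa only [hnorm] using hc)).symm
    _ = ∑' n, c n / β ^ (n + 1) := by simp only [hterm]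

theorem integral_exp_neg_mul_mul_tsum_rf (m : ℕ) {β δ : ℝ} (hδ : |δ| < β) :
    ∫ x in Ioi (0 : ℝ), exp (-β * x) * ∑' i : ℕ, rf m i * (δ * x) ^ i / (i.factorial : ℝ) ^ 2 =
      (β / (β - δ)) ^ m / β := by
  have hβ : 0 < β := (abs_nonneg δ).trans_lt hδ
  have hratio {r : ℝ} (hr : |r| ≤ |δ|) : ‖r / β‖ < 1 := by
    rw [norm_div, norm_of_nonneg hβ.le, div_lt_one hβ]
    exact hr.trans_lt hδ
  have hcoeff (r : ℝ) (n : ℕ) : m.ascFactorial n / n.factorial * r ^ n / β ^ (n + 1) =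
      β⁻¹ * (m.ascFactorial n / n.factorial * (r / β) ^ n) := by
    rw [div_pow, pow_succ]
    field_simp
  have hsum := hasSum_ascFactorial_div_factorial_mul_geometric m (hratio le_rfl)
  have habs := hasSum_ascFactorial_div_factorial_mul_geometric m (hratio (abs_abs δ).le)
  calc ∫ x in Ioi (0 : ℝ), exp (-β * x) * ∑' i : ℕ, rf m i * (δ * x) ^ i / (i.factorial : ℝ) ^ 2
      = ∫ x in Ioi (0 : ℝ), exp (-β * x) *
          ∑' i : ℕ, m.ascFactorial i / i.factorial * δ ^ i * x ^ i / i.factorial := by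
        simp only [rf_natCast, mul_pow, sq]
        congr! 5 with x i
        field_simp
    _ = ∑' i : ℕ, m.ascFactorial i / i.factorial * δ ^ i / β ^ (i + 1) := by
        refine integral_exp_neg_mul_mul_tsum hβ ?_
        simp only [abs_mul, abs_div, Nat.abs_cast, abs_pow, hcoeff]
        exact habs.summable.mul_left _
    _ = (β / (β - δ)) ^ m / β := by
        simp only [hcoeff, tsum_mul_left, hsum.tsum_eq]
        rw [one_sub_div hβ.ne', one_div, ← inv_pow, inv_div]
        ring

/-- The shadowed-Rician density with parameters `b > 0`, `Ω > 0`, positive integer `m`,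
`α = (1/(2b))·(2bm/(2bm+Ω))^m`, `β = 1/(2b)`, `δ = Ω/(2b(2bm+Ω))` integrates to one over
`(0, ∞)`. -/
theorem stmt_2 (b Ωp α β δ : ℝ) (m : ℕ) (hb : 0 < b) (hΩ : 0 < Ωp) (hm : 0 < m)
    (hα : α = 1 / (2 * b) * ((2 * b * m) / (2 * b * m + Ωp)) ^ m)
    (hβ : β = 1 / (2 * b))
    (hδ : δ = Ωp / (2 * b * (2 * b * m + Ωp))) :
    ∫ x in Set.Ioi (0 : ℝ),
        α * Real.exp (-β * x) *
          ∑' i : ℕ, rf (m : ℝ) i * (δ * x) ^ i / ((i.factorial : ℝ)) ^ 2 = 1 := by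
  set q : ℝ := 2 * b * m / (2 * b * m + Ωp) with hq
  have hq0 : 0 < q := by positivity
  have hβ0 : 0 < β := by rw [hβ]; positivity
  have hδ0 : 0 < δ := by rw [hδ]; positivity
  have hβδ : β - δ = β * q := by
    rw [hβ, hδ, hq]
    field_simp
    ring
  have hδβ : |δ| < β := by
    rw [abs_of_pos hδ0, ← sub_pos, hβδ]
    positivity
  simp_rw [mul_assoc α]
  rw [integral_const_mul, integral_exp_neg_mul_mul_tsum_rf m hδβ, hβδ, hα, ← hβ,
    div_mul_cancel_left₀ hβ0.ne', inv_pow]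
  field_simp
end

section
/- Let m be a positive integer, α > 0, and 0 < δ < β. Then for every x ≥ 0, ∫₀^x α e^{−βt} Σ_{i=0}^∞ (m)_i (δt)^i/(i!)² dt = α Σ_{i=0}^∞ [(m)_i δ^i / ((i!)² β^{i+1})] γ(i+1, βx), where γ(s,y) = ∫₀^y t^{s−1} e^{−t} dt is the lower incomplete Gamma function; i.e., the CDF of the shadowed-Rician density admits this series representation in terms of lower incomplete Gamma functions. -/
/-- Lower incomplete Gamma function `γ(s, x) = ∫₀^x t^(s-1) e^(-t) dt`. -/
noncomputable def lincGamma (s x : ℝ) : ℝ := ∫ t in (0 : ℝ)..x, t ^ (s - 1) * Real.exp (-t)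

/-!
The bound `|(a)ₙ| ≤ (|a| + 1)ⁿ n!` makes the coefficients `(m)ᵢ δⁱ / (i!)²` decay like those of
an exponential series, so the series converges absolutely and uniformly on `[0, x]`, and by
dominated convergence (with constant dominating terms) it may be integrated term by term. Each
term is `∫₀ˣ tⁱ e^{-βt} dt = γ(i + 1, βx) / β^{i+1}`, by the substitution `u = βt`.
-/

open Real Nat

theorem abs_rf_le (a : ℝ) (n : ℕ) : |rf a n| ≤ (|a| + 1) ^ n * n ! := by
  induction n with
  | zero => simp [rf]
  | succ n ih =>
    have hstep : |a + n| ≤ (|a| + 1) * (n + 1) := by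
      have := abs_add_le a n
      rw [Nat.abs_cast] at this
      nlinarith [abs_nonneg a, (Nat.cast_nonneg n : (0:ℝ) ≤ n)]
    rw [rf, abs_mul, factorial_succ, pow_succ]
    push_cast
    calc |rf a n| * |a + n| ≤ (|a| + 1) ^ n * n ! * ((|a| + 1) * (n + 1)) := by
          gcongr
      _ = _ := by ring

theorem summable_norm_rf_mul_pow_div_factorial_sq (a y : ℝ) :
    Summable fun n => ‖rf a n * y ^ n / (n ! : ℝ) ^ 2‖ := by
  refine .of_nonneg_of_le (fun _ => norm_nonneg _) (fun n => ?_)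
    (summable_pow_div_factorial ((|a| + 1) * |y|))
  have hfac : (0 : ℝ) < n ! := by positivity
  rw [norm_div, norm_mul, norm_pow, Real.norm_eq_abs, Real.norm_eq_abs, norm_pow,
    Real.norm_natCast, mul_pow, div_le_div_iff₀ (by positivity) hfac]
  calc |rf a n| * |y| ^ n * n ! ≤ (|a| + 1) ^ n * n ! * |y| ^ n * n ! := by
        gcongr; exact abs_rf_le a n
    _ = _ := by ring

theorem lincGamma_natCast_add_one (n : ℕ) (y : ℝ) :
    lincGamma (n + 1) y = ∫ t in (0 : ℝ)..y, t ^ n * exp (-t) := by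
  simp [lincGamma, Real.rpow_natCast]

theorem integral_pow_mul_exp_neg_mul {β : ℝ} (hβ : β ≠ 0) (n : ℕ) (x : ℝ) :
    ∫ t in (0 : ℝ)..x, t ^ n * exp (-β * t) = lincGamma (n + 1) (β * x) / β ^ (n + 1) := by
  have hsub := intervalIntegral.integral_comp_mul_left (a := 0) (b := x)
    (fun u => u ^ n * exp (-u)) hβ
  simp only [mul_zero, smul_eq_mul, mul_pow, mul_assoc, intervalIntegral.integral_const_mul] at hsub
  simp only [neg_mul]
  rw [lincGamma_natCast_add_one, eq_div_iff (pow_ne_zero _ hβ), pow_succ, ← mul_assoc,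
    mul_comm _ (β ^ n), hsub, mul_comm, ← mul_assoc, mul_inv_cancel₀ hβ, one_mul]

theorem integral_exp_mul_tsum_pow (β x : ℝ) {c : ℕ → ℝ} (hc : Summable fun n => ‖c n * x ^ n‖) :
    ∫ t in (0 : ℝ)..x, exp (-β * t) * ∑' n, c n * t ^ n =
      ∑' n, c n * ∫ t in (0 : ℝ)..x, t ^ n * exp (-β * t) := by
  have habs {t : ℝ} (ht : t ∈ Set.uIoc 0 x) : |t| ≤ |x| := by
    simpa using Set.abs_sub_left_of_mem_uIcc (Set.uIoc_subset_uIcc ht)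
  have hterm {t : ℝ} (ht : t ∈ Set.uIoc 0 x) (n : ℕ) : ‖c n * t ^ n‖ ≤ ‖c n * x ^ n‖ := by
    simp only [norm_mul, norm_pow, Real.norm_eq_abs]
    exact mul_le_mul_of_nonneg_left (pow_le_pow_left₀ (abs_nonneg _) (habs ht) n) (abs_nonneg _)
  have hexp {t : ℝ} (ht : t ∈ Set.uIoc 0 x) : ‖exp (-β * t)‖ ≤ exp (|β| * |x|) := by
    rw [Real.norm_eq_abs, abs_exp, exp_le_exp]
    calc -β * t ≤ |-β * t| := le_abs_self _
      _ = |β| * |t| := by rw [abs_mul, abs_neg]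
      _ ≤ |β| * |x| := mul_le_mul_of_nonneg_left (habs ht) (abs_nonneg β)
  have hsum := intervalIntegral.hasSum_integral_of_dominated_convergence (μ := MeasureTheory.volume)
    (F := fun n t => exp (-β * t) * (c n * t ^ n))
    (fun n _ => exp (|β| * |x|) * ‖c n * x ^ n‖)
    (fun n => (by fun_prop : Continuous _).aestronglyMeasurable)
    (fun n => .of_forall fun t ht => by
      rw [norm_mul]; exact mul_le_mul (hexp ht) (hterm ht n) (norm_nonneg _) (exp_pos _).le)
    (.of_forall fun _ _ => hc.mul_left _) intervalIntegrable_const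
    (.of_forall fun t ht => ((hc.of_norm_bounded (hterm ht)).hasSum).mul_left _)
  rw [← hsum.tsum_eq]
  refine tsum_congr fun n => ?_
  rw [← intervalIntegral.integral_const_mul]
  congr 1 with t
  ring

theorem stmt_3_general (α β δ : ℝ) (m : ℕ) (hδ : 0 < δ) (hδβ : δ < β)
    (x : ℝ) :
    ∫ t in (0 : ℝ)..x,
        α * Real.exp (-β * t) *
          ∑' i : ℕ, rf (m : ℝ) i * (δ * t) ^ i / ((i.factorial : ℝ)) ^ 2
      = α * ∑' i : ℕ,
          rf (m : ℝ) i * δ ^ i / (((i.factorial : ℝ)) ^ 2 * β ^ (i + 1)) *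
            lincGamma ((i : ℝ) + 1) (β * x) := by
  have hβ : β ≠ 0 := (hδ.trans hδβ).ne'
  set c : ℕ → ℝ := fun i => rf m i * δ ^ i / (i ! : ℝ) ^ 2
  have hterm (t : ℝ) (i : ℕ) : rf m i * (δ * t) ^ i / (i ! : ℝ) ^ 2 = c i * t ^ i := by
    simp only [c]; ring
  have hc : Summable fun i => ‖c i * x ^ i‖ := by
    simpa only [hterm] using summable_norm_rf_mul_pow_div_factorial_sq m (δ * x)
  simp_rw [hterm, mul_assoc, intervalIntegral.integral_const_mul, integral_exp_mul_tsum_pow β x hc,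
    integral_pow_mul_exp_neg_mul hβ]
  congr 1
  refine tsum_congr fun i => ?_
  simp only [c]
  field_simp

/-- The CDF of the shadowed-Rician density `f_H(t) = α e^{-βt} ∑_i (m)_i (δt)^i/(i!)²`
admits the series representation
`F(x) = α ∑_i (m)_i δ^i / ((i!)² β^(i+1)) · γ(i+1, βx)` in terms of lower incomplete Gamma
functions. -/
theorem stmt_3 (α β δ : ℝ) (m : ℕ) (hm : 0 < m) (hα : 0 < α) (hδ : 0 < δ) (hδβ : δ < β)
    (x : ℝ) (hx : 0 ≤ x) :
    ∫ t in (0 : ℝ)..x,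
        α * Real.exp (-β * t) *
          ∑' i : ℕ, rf (m : ℝ) i * (δ * t) ^ i / ((i.factorial : ℝ)) ^ 2
      = α * ∑' i : ℕ,
          rf (m : ℝ) i * δ ^ i / (((i.factorial : ℝ)) ^ 2 * β ^ (i + 1)) *
            lincGamma ((i : ℝ) + 1) (β * x) :=
  stmt_3_general α β δ m hδ hδβ x
end

section
/- Let H have the shadowed-Rician density f_H (parameters b, Ω, m, α, β, δ) and let I be an independent Gamma(k,η)-distributed random variable; let c > 0. Then for every x ≥ 0, P(cH/I ≤ x) = (α/(Γ(k)η^k)) Σ_{i=0}^∞ Σ_{j=0}^∞ [(m)_i δ^i Γ(i+1) Γ(i+j+k+1) / ((i!)² β^{i+1} Γ(i+j+2))] (βx/c)^{i+j+1} (βx/c + 1/η)^{−(i+j+k+1)}. -/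
open MeasureTheory ProbabilityTheory

/-- Shadowed-Rician density with parameters `α, β, δ` and positive integer `m`:
`f_H(x) = α e^{-βx} ∑_i (m)_i (δx)^i / (i!)²` for `x > 0`, and `0` otherwise. -/
noncomputable def srDensity (α β δ : ℝ) (m : ℕ) (x : ℝ) : ℝ :=
  if 0 < x then
    α * Real.exp (-β * x) * ∑' i : ℕ, rf (m : ℝ) i * (δ * x) ^ i / ((i.factorial : ℝ)) ^ 2
  else 0

/-- Gamma(k, η) density: `g(y) = y^(k-1) e^(-y/η) / (Γ(k) η^k)` for `y > 0`, `0` otherwise. -/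
noncomputable def gammaDensity (k η : ℝ) (y : ℝ) : ℝ :=
  if 0 < y then y ^ (k - 1) * Real.exp (-y / η) / (Real.Gamma k * η ^ k) else 0

/-!
Conditioning on `I = y` gives `P(cH/I ≤ x) = ∫ F_H(xy/c) g(y) dy`, with `F_H` the CDF of `H`.
Expanding `f_H` termwise, each term of `F_H(T)` is a lower incomplete gamma integral
`∫₀ᵀ tⁱ e^{-βt} dt = i!/β^{i+1} · e^{-βT} ∑_j (βT)^{i+j+1}/(i+j+1)!`,
and each resulting term `y^{i+j+1} e^{-(βx/c) y}` integrates against the Gamma density to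
`Γ(i+j+k+1) (βx/c + 1/η)^{-(i+j+k+1)} / (Γ(k) η^k)`.
All terms are nonnegative, so every interchange of sums and integrals is Tonelli's theorem.
-/

open Real Set MeasureTheory ProbabilityTheory
open scoped Nat ENNReal

lemma rf_nonneg {a : ℝ} (ha : 0 ≤ a) (n : ℕ) : 0 ≤ rf a n := by
  induction n with
  | zero => simp [rf]
  | succ n ih => exact mul_nonneg ih (by positivity)

lemma rf_le_add_one_pow_mul_factorial {a : ℝ} (ha : 0 ≤ a) (n : ℕ) :
    rf a n ≤ (a + 1) ^ n * n ! := by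
  induction n with
  | zero => simp [rf]
  | succ n ih =>
    rw [rf, pow_succ, Nat.factorial_succ, Nat.cast_mul]
    have hn : a + n ≤ (a + 1) * ((n : ℝ) + 1) := by nlinarith [(Nat.cast_nonneg n : (0 : ℝ) ≤ n)]
    calc rf a n * (a + n) ≤ (a + 1) ^ n * n ! * ((a + 1) * ((n : ℝ) + 1)) :=
          mul_le_mul ih hn (by positivity) (by positivity)
      _ = _ := by push_cast; ring

lemma summable_rf_mul_pow_div_factorial_sq {a : ℝ} (ha : 0 ≤ a) (z : ℝ) :
    Summable fun i : ℕ => rf a i * z ^ i / (i ! : ℝ) ^ 2 := by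
  refine (Real.summable_pow_div_factorial ((a + 1) * |z|)).of_norm_bounded fun i => ?_
  have hi : (0 : ℝ) < i ! := by positivity
  rw [Real.norm_eq_abs, abs_div, abs_mul, abs_of_nonneg (rf_nonneg ha i), abs_pow, abs_pow,
    abs_of_pos hi, mul_pow, div_le_div_iff₀ (by positivity) hi]
  calc rf a i * |z| ^ i * i ! ≤ (a + 1) ^ i * i ! * |z| ^ i * i ! := by
        gcongr; exact rf_le_add_one_pow_mul_factorial ha i
    _ = _ := by ring

lemma hasDerivAt_neg_exp_neg_mul_div {β : ℝ} (hβ : β ≠ 0) (t : ℝ) :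
    HasDerivAt (fun t => -exp (-β * t) / β) (exp (-β * t)) t := by
  have h := (((hasDerivAt_id t).const_mul (-β)).exp.neg).div_const β
  simp only [id, mul_one] at h
  exact h.congr_deriv (by field_simp)

lemma intervalIntegral_pow_mul_exp_neg_mul {β : ℝ} (hβ : β ≠ 0) (T : ℝ) (n : ℕ) :
    ∫ t in (0 : ℝ)..T, t ^ n * exp (-β * t)
      = n ! / β ^ (n + 1) * (1 - exp (-β * T) * ∑ r ∈ Finset.range (n + 1), (β * T) ^ r / r !) := by
  induction n with
  | zero =>
    simp only [pow_zero, one_mul]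
    rw [intervalIntegral.integral_eq_sub_of_hasDerivAt
      (fun t _ => hasDerivAt_neg_exp_neg_mul_div hβ t)
      (Continuous.intervalIntegrable (by fun_prop) _ _)]
    simp
    field_simp
    ring
  | succ n ih =>
    have hparts := intervalIntegral.integral_mul_deriv_eq_deriv_mul (a := 0) (b := T)
      (fun t _ => hasDerivAt_pow (n + 1) t) (fun t _ => hasDerivAt_neg_exp_neg_mul_div hβ t)
      (Continuous.intervalIntegrable (by fun_prop) _ _)
      (Continuous.intervalIntegrable (by fun_prop) _ _)
    have hrec : ∫ t in (0 : ℝ)..T, ((n + 1 : ℕ) : ℝ) * t ^ n * (-exp (-β * t) / β)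
        = -((n + 1 : ℕ) / β) * ∫ t in (0 : ℝ)..T, t ^ n * exp (-β * t) := by
      rw [← intervalIntegral.integral_const_mul]
      congr 1; ext t; ring
    simp only [Nat.add_sub_cancel] at hparts
    rw [hparts, hrec, ih, Finset.sum_range_succ _ (n + 1), Nat.factorial_succ]
    push_cast
    field_simp
    ring

lemma exp_sub_sum_range_eq_tsum (z : ℝ) (n : ℕ) :
    exp z - ∑ r ∈ Finset.range n, z ^ r / r ! = ∑' j, z ^ (n + j) / (n + j)! := by
  rw [Real.exp_eq_exp_ℝ, NormedSpace.exp_eq_tsum_div]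
  beta_reduce
  rw [← (Real.summable_pow_div_factorial z).sum_add_tsum_nat_add n]
  simp only [add_sub_cancel_left, add_comm _ n]

lemma intervalIntegral_pow_mul_exp_neg_mul_eq_tsum {β : ℝ} (hβ : β ≠ 0) (T : ℝ) (n : ℕ) :
    ∫ t in (0 : ℝ)..T, t ^ n * exp (-β * t)
      = ∑' j, n ! / β ^ (n + 1) * ((β * T) ^ (n + j + 1) / (n + j + 1)! * exp (-β * T)) := by
  have hexp : 1 = exp (-β * T) * exp (β * T) := by rw [← exp_add]; simp
  rw [intervalIntegral_pow_mul_exp_neg_mul hβ, hexp, ← mul_sub, exp_sub_sum_range_eq_tsum,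
    ← tsum_mul_left, ← tsum_mul_left]
  congr 1; ext j
  rw [show n + 1 + j = n + j + 1 by omega]
  ring

lemma withDensity_srDensity_Iic {α β δ : ℝ} {m : ℕ} (hα : 0 ≤ α) (hβ : 0 < β) (hδ : 0 ≤ δ)
    {T : ℝ} (hT : 0 ≤ T) :
    volume.withDensity (fun t => ENNReal.ofReal (srDensity α β δ m t)) (Iic T)
      = ∑' i, ∑' j, ENNReal.ofReal (α * rf m i * δ ^ i / (i ! : ℝ) ^ 2
          * (i ! / β ^ (i + 1) * ((β * T) ^ (i + j + 1) / (i + j + 1)! * exp (-β * T)))) := by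
  have hcoeff : ∀ i : ℕ, 0 ≤ α * rf m i * δ ^ i / (i ! : ℝ) ^ 2 := fun i => by
    have := rf_nonneg (Nat.cast_nonneg m) i
    positivity
  have hneg : ∫⁻ t in Iic 0, ENNReal.ofReal (srDensity α β δ m t) = 0 := by
    rw [setLIntegral_congr_fun measurableSet_Iic fun t (ht : t ≤ 0) => by
      rw [srDensity, if_neg (not_lt.2 ht)]]
    simp
  have hpos : ∀ t ∈ Ioc 0 T, ENNReal.ofReal (srDensity α β δ m t)
      = ∑' i, ENNReal.ofReal (α * rf m i * δ ^ i / (i ! : ℝ) ^ 2 * (t ^ i * exp (-β * t))) := by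
    intro t ht
    have hsum := summable_rf_mul_pow_div_factorial_sq (Nat.cast_nonneg m) (δ * t)
    rw [srDensity, if_pos ht.1, ← tsum_mul_left, ENNReal.ofReal_tsum_of_nonneg]
    · congr 1; ext i; congr 1; rw [mul_pow]; ring
    · intro i
      have := rf_nonneg (Nat.cast_nonneg m) i
      have := ht.1.le
      positivity
    · exact hsum.mul_left _
  rw [withDensity_apply _ measurableSet_Iic, ← Iic_union_Ioc_eq_Iic hT,
    lintegral_union measurableSet_Ioc (Iic_disjoint_Ioc le_rfl), hneg, zero_add,
    setLIntegral_congr_fun measurableSet_Ioc hpos,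
    lintegral_tsum fun i => (Measurable.ennreal_ofReal (by fun_prop)).aemeasurable]
  congr 1; ext i
  rw [← ofReal_integral_eq_lintegral_ofReal (Continuous.integrableOn_Ioc (by fun_prop))
      ((ae_restrict_iff' measurableSet_Ioc).2 (ae_of_all _ fun t ht => by
        have := ht.1.le
        have := hcoeff i
        positivity)),
    ← intervalIntegral.integral_of_le hT, intervalIntegral.integral_const_mul,
    intervalIntegral_pow_mul_exp_neg_mul_eq_tsum hβ.ne', ← tsum_mul_left,
    ENNReal.ofReal_tsum_of_nonneg (fun j => by have := hcoeff i; positivity)]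
  have hinj : Function.Injective fun j : ℕ => i + j + 1 := fun a b h => by simpa using h
  exact ((((Real.summable_pow_div_factorial (β * T)).comp_injective hinj).mul_right
    (exp (-β * T))).mul_left _).mul_left _

lemma IndepFun.measure_preimage_eq_lintegral {Ω E F : Type*} [MeasurableSpace Ω]
    [MeasurableSpace E] [MeasurableSpace F] {μ : Measure Ω} [IsFiniteMeasure μ]
    {X : Ω → E} {Y : Ω → F} (hX : Measurable X) (hY : Measurable Y) (hXY : IndepFun X Y μ)
    {S : Set (E × F)} (hS : MeasurableSet S) :
    μ ((fun ω => (X ω, Y ω)) ⁻¹' S) = ∫⁻ y, μ.map X ((fun x => (x, y)) ⁻¹' S) ∂μ.map Y := by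
  rw [← Measure.map_apply (hX.prodMk hY) hS,
    (indepFun_iff_map_prod_eq_prod_map_map hX.aemeasurable hY.aemeasurable).1 hXY,
    Measure.prod_apply_symm hS]

lemma measurable_gammaDensity (k η : ℝ) : Measurable (gammaDensity k η) :=
  Measurable.ite measurableSet_Ioi (by fun_prop) measurable_const

lemma gammaDensity_nonneg {k η : ℝ} (hk : 0 < k) (hη : 0 < η) (y : ℝ) :
    0 ≤ gammaDensity k η y := by
  unfold gammaDensity
  split_ifs with hy
  · have := hy.le
    positivity
  · rfl

lemma lintegral_withDensity_gammaDensity (k η : ℝ) (f : ℝ → ℝ≥0∞) :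
    ∫⁻ y, f y ∂volume.withDensity (fun y => ENNReal.ofReal (gammaDensity k η y))
      = ∫⁻ y in Ioi 0, ENNReal.ofReal (gammaDensity k η y) * f y := by
  rw [lintegral_withDensity_eq_lintegral_mul_non_measurable _
      (measurable_gammaDensity k η).ennreal_ofReal (ae_of_all _ fun _ => ENNReal.ofReal_lt_top),
    ← lintegral_indicator measurableSet_Ioi]
  congr 1; ext y
  by_cases hy : y ∈ Ioi 0
  · rw [indicator_of_mem hy]; rfl
  · rw [indicator_of_notMem hy, Pi.mul_apply, gammaDensity, if_neg (by simpa using hy), ENNReal.ofReal_zero,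
      zero_mul]

lemma setLIntegral_gammaDensity_mul_pow_mul_exp {k η a : ℝ} (hk : 0 < k) (hη : 0 < η)
    (ha : 0 < a + 1 / η) (p : ℕ) :
    ∫⁻ y in Ioi 0, ENNReal.ofReal (gammaDensity k η y * (y ^ p * exp (-(a * y))))
      = ENNReal.ofReal (Gamma (p + k) / (Gamma k * η ^ k) * (a + 1 / η) ^ (-(p + k : ℝ))) := by
  have hnorm : 0 < Gamma k * η ^ k := by positivity
  have hpt : ∀ y ∈ Ioi (0 : ℝ), ENNReal.ofReal (gammaDensity k η y * (y ^ p * exp (-(a * y))))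
      = ENNReal.ofReal ((Gamma k * η ^ k)⁻¹ * (y ^ ((p + k : ℝ) - 1) * exp (-((a + 1 / η) * y)))) := by
    intro y (hy : 0 < y)
    rw [gammaDensity, if_pos hy, show (p + k : ℝ) - 1 = p + (k - 1) by ring,
      rpow_add hy, rpow_natCast, show -((a + 1 / η) * y) = -y / η + -(a * y) by ring, exp_add]
    ring_nf
  rw [setLIntegral_congr_fun measurableSet_Ioi hpt,
    ← ofReal_integral_eq_lintegral_ofReal
      (((integrableOn_rpow_mul_exp_neg_mul_rpow (s := (p + k : ℝ) - 1) (by linarith) one_pos ha).congr_fun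
        (fun y _ => by simp only [rpow_one, neg_mul]) measurableSet_Ioi).const_mul _)
      ((ae_restrict_iff' measurableSet_Ioi).2 (ae_of_all _ fun y (hy : 0 < y) => by positivity)),
    integral_const_mul, integral_rpow_mul_exp_neg_mul_Ioi (by positivity) ha,
    rpow_neg ha.le, ← inv_rpow ha.le, one_div]
  ring_nf

lemma lintegral_srDensity_div_le_withDensity_gammaDensity {α β δ : ℝ} {m : ℕ} {k η c x : ℝ}
    (hα : 0 ≤ α) (hβ : 0 < β) (hδ : 0 ≤ δ) (hk : 0 < k) (hη : 0 < η) (hc : 0 < c) (hx : 0 ≤ x) :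
    ∫⁻ y, volume.withDensity (fun t => ENNReal.ofReal (srDensity α β δ m t)) {t | c * t / y ≤ x}
        ∂volume.withDensity (fun y => ENNReal.ofReal (gammaDensity k η y))
      = ∑' i : ℕ, ∑' j : ℕ, ENNReal.ofReal (α / (Gamma k * η ^ k) *
          (rf m i * δ ^ i * Gamma ((i : ℝ) + 1) * Gamma ((i : ℝ) + (j : ℝ) + k + 1)
            / ((i ! : ℝ) ^ 2 * β ^ (i + 1) * Gamma ((i : ℝ) + (j : ℝ) + 2))
            * (β * x / c) ^ (i + j + 1)
            * (β * x / c + 1 / η) ^ (-((i : ℝ) + (j : ℝ) + k + 1)))) := by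
  set a := β * x / c
  have ha : 0 < a + 1 / η := by positivity
  set A : ℕ → ℕ → ℝ := fun i j => α * rf m i * δ ^ i / (i ! : ℝ) ^ 2
    * (i ! / β ^ (i + 1) * (a ^ (i + j + 1) / (i + j + 1)!)) with hA_def
  have hA : ∀ i j, 0 ≤ A i j := fun i j => by
    have := rf_nonneg (Nat.cast_nonneg m) i
    positivity
  have hinner : ∀ y ∈ Ioi (0 : ℝ), ENNReal.ofReal (gammaDensity k η y)
      * volume.withDensity (fun t => ENNReal.ofReal (srDensity α β δ m t)) {t | c * t / y ≤ x}
      = ∑' i, ∑' j, ENNReal.ofReal (A i j)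
          * ENNReal.ofReal (gammaDensity k η y * (y ^ (i + j + 1) * exp (-(a * y)))) := by
    intro y (hy : 0 < y)
    have hpre : {t | c * t / y ≤ x} = Iic (x * y / c) := by
      ext t
      rw [mem_ofPred_eq, mem_Iic, div_le_iff₀ hy, le_div_iff₀ hc, mul_comm c]
    rw [hpre, withDensity_srDensity_Iic hα hβ hδ (by positivity), ← ENNReal.tsum_mul_left]
    congr 1; ext i
    rw [← ENNReal.tsum_mul_left]
    congr 1; ext j
    rw [← ENNReal.ofReal_mul (gammaDensity_nonneg hk hη y), ← ENNReal.ofReal_mul (hA i j)]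
    congr 1
    rw [show β * (x * y / c) = a * y by ring, show -β * (x * y / c) = -(a * y) by ring, mul_pow]
    ring
  have hmeas : ∀ p : ℕ,
      Measurable fun y => ENNReal.ofReal (gammaDensity k η y * (y ^ p * exp (-(a * y)))) :=
    fun p => ((measurable_gammaDensity k η).mul (by fun_prop)).ennreal_ofReal
  rw [lintegral_withDensity_gammaDensity, setLIntegral_congr_fun measurableSet_Ioi hinner,
    lintegral_tsum fun i => (Measurable.tsum fun j => (hmeas _).const_mul _).aemeasurable]
  congr 1; ext i
  rw [lintegral_tsum fun j => ((hmeas _).const_mul _).aemeasurable]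
  congr 1; ext j
  rw [lintegral_const_mul _ (hmeas _), setLIntegral_gammaDensity_mul_pow_mul_exp hk hη ha,
    ← ENNReal.ofReal_mul (hA i j)]
  congr 1
  have hfac : Gamma ((i : ℝ) + (j : ℝ) + 2) = (i + j + 1)! := by
    rw [← Gamma_nat_eq_factorial]; congr 1; push_cast; ring
  have hexp : ((i + j + 1 : ℕ) : ℝ) + k = (i : ℝ) + (j : ℝ) + k + 1 := by push_cast; ring
  rw [Gamma_nat_eq_factorial, hfac, hexp, hA_def]
  field_simp

lemma ENNReal.toReal_tsum_tsum_ofReal {ι κ : Type*} {f : ι → κ → ℝ} (hf : ∀ i j, 0 ≤ f i j)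
    (hfin : ∑' i, ∑' j, ENNReal.ofReal (f i j) ≠ ∞) :
    (∑' i, ∑' j, ENNReal.ofReal (f i j)).toReal = ∑' i, ∑' j, f i j := by
  rw [ENNReal.tsum_toReal_eq fun i => ne_top_of_le_ne_top hfin (ENNReal.le_tsum i)]
  congr 1; ext i
  rw [ENNReal.tsum_toReal_eq fun j => ENNReal.ofReal_ne_top]
  exact tsum_congr fun j => ENNReal.toReal_ofReal (hf i j)

theorem stmt_7_general {Ωs : Type*} [MeasurableSpace Ωs] (μ : Measure Ωs) [IsProbabilityMeasure μ]
    (b Ωp α β δ : ℝ) (m : ℕ) (k η c : ℝ)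
    (hb : 0 < b) (hΩ : 0 < Ωp)
    (hα : α = 1 / (2 * b) * ((2 * b * m) / (2 * b * m + Ωp)) ^ m)
    (hβ : β = 1 / (2 * b))
    (hδ : δ = Ωp / (2 * b * (2 * b * m + Ωp)))
    (hk : 0 < k) (hη : 0 < η) (hc : 0 < c)
    (H I : Ωs → ℝ) (hHm : Measurable H) (hIm : Measurable I)
    (hH : Measure.map H μ = volume.withDensity fun t => ENNReal.ofReal (srDensity α β δ m t))
    (hI : Measure.map I μ = volume.withDensity fun y => ENNReal.ofReal (gammaDensity k η y))
    (hindep : IndepFun H I μ)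
    (x : ℝ) (hx : 0 ≤ x) :
    (μ {ω | c * H ω / I ω ≤ x}).toReal
      = α / (Real.Gamma k * η ^ k) *
          ∑' i : ℕ, ∑' j : ℕ,
            rf (m : ℝ) i * δ ^ i * Real.Gamma ((i : ℝ) + 1)
                * Real.Gamma ((i : ℝ) + (j : ℝ) + k + 1)
              / (((i.factorial : ℝ)) ^ 2 * β ^ (i + 1) * Real.Gamma ((i : ℝ) + (j : ℝ) + 2))
              * (β * x / c) ^ (i + j + 1)
              * (β * x / c + 1 / η) ^ (-((i : ℝ) + (j : ℝ) + k + 1)) := by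
  have hβ0 : 0 < β := by rw [hβ]; positivity
  have hδ0 : 0 ≤ δ := by rw [hδ]; positivity
  have hα0 : 0 ≤ α := by rw [hα]; positivity
  have hprob := IndepFun.measure_preimage_eq_lintegral hHm hIm hindep
    (measurableSet_le (by fun_prop) measurable_const : MeasurableSet {p : ℝ × ℝ | c * p.1 / p.2 ≤ x})
  simp only [preimage_ofPred_eq, hH, hI] at hprob
  rw [lintegral_srDensity_div_le_withDensity_gammaDensity hα0 hβ0 hδ0 hk hη hc hx] at hprob
  rw [hprob, ENNReal.toReal_tsum_tsum_ofReal (fun i j => ?_) (hprob ▸ measure_ne_top μ _)]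
  · simp only [tsum_mul_left]
  · have := rf_nonneg (Nat.cast_nonneg m) i
    positivity

/-- If `H` is shadowed-Rician, `I` an independent Gamma(k, η) random variable, and `c > 0`,
then for every `x ≥ 0` the CDF of `γ = cH/I` is the stated double series. -/
theorem stmt_7 {Ωs : Type*} [MeasurableSpace Ωs] (μ : Measure Ωs) [IsProbabilityMeasure μ]
    (b Ωp α β δ : ℝ) (m : ℕ) (k η c : ℝ)
    (hb : 0 < b) (hΩ : 0 < Ωp) (hm : 0 < m)
    (hα : α = 1 / (2 * b) * ((2 * b * m) / (2 * b * m + Ωp)) ^ m)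
    (hβ : β = 1 / (2 * b))
    (hδ : δ = Ωp / (2 * b * (2 * b * m + Ωp)))
    (hk : 0 < k) (hη : 0 < η) (hc : 0 < c)
    (H I : Ωs → ℝ) (hHm : Measurable H) (hIm : Measurable I)
    (hH : Measure.map H μ = volume.withDensity fun t => ENNReal.ofReal (srDensity α β δ m t))
    (hI : Measure.map I μ = volume.withDensity fun y => ENNReal.ofReal (gammaDensity k η y))
    (hindep : IndepFun H I μ)
    (x : ℝ) (hx : 0 ≤ x) :
    (μ {ω | c * H ω / I ω ≤ x}).toReal
      = α / (Real.Gamma k * η ^ k) *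
          ∑' i : ℕ, ∑' j : ℕ,
            rf (m : ℝ) i * δ ^ i * Real.Gamma ((i : ℝ) + 1)
                * Real.Gamma ((i : ℝ) + (j : ℝ) + k + 1)
              / (((i.factorial : ℝ)) ^ 2 * β ^ (i + 1) * Real.Gamma ((i : ℝ) + (j : ℝ) + 2))
              * (β * x / c) ^ (i + j + 1)
              * (β * x / c + 1 / η) ^ (-((i : ℝ) + (j : ℝ) + k + 1)) :=
  stmt_7_general μ b Ωp α β δ m k η c hb hΩ hα hβ hδ hk hη hc H I hHm hIm hH hI hindep x hx
end

section
/- Let f_H be the shadowed-Rician density (parameters b, Ω, m, α, β, δ), let g be the Gamma(k,η) density, and let c > 0. Then for every x > 0, ∫₀^∞ y f_H(xy/c) g(y) dy = (α/(Γ(k)η^k)) Σ_{l=0}^{m−1} [(−1)^l (1−m)_l / (l!)²] (δx/c)^l Γ(l+k+1) ((β−δ)x/c + 1/η)^{−(l+k+1)}. -/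
open MeasureTheory

/-!
Kummer's transformation `₁F₁(m; 1; z) = e^z ₁F₁(1 - m; 1; -z)` turns the series in `f_H(t)`
into `e^{δt}` times a polynomial of degree `m - 1` in `t`; comparing coefficients of the Cauchy product
with the exponential series, this is Vandermonde's convolution. Hence `y f_H(xy/c) g(y)` is a finite
combination of the functions `y^{l+k} e^{-sy}` with `s = (β - δ)x/c + 1/η > 0`, each of which
integrates over `(0, ∞)` to `Γ(l+k+1) s^{-(l+k+1)}`.
-/

open Finset

lemma rf_natCast_s8 (n : ℕ) : ∀ j, rf (n : ℝ) j = n.ascFactorial j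
  | 0 => by simp [rf]
  | j + 1 => by
    rw [rf, rf_natCast_s8 n j, Nat.ascFactorial_succ]
    push_cast
    ring

lemma rf_neg_natCast (n : ℕ) : ∀ j, rf (-(n : ℝ)) j = (-1) ^ j * n.descFactorial j
  | 0 => by simp [rf]
  | j + 1 => by
    rw [rf, rf_neg_natCast n j, Nat.descFactorial_succ]
    rcases le_or_gt n j with h | h
    · obtain h | rfl := h.lt_or_eq
      · simp [Nat.descFactorial_eq_zero_iff_lt.mpr h]
      · simp
    · push_cast [Nat.cast_sub h.le]
      ring

lemma sum_antidiagonal_inv_factorial_mul_descFactorial (n N : ℕ) :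
    ∑ ij ∈ antidiagonal N,
        (ij.1.factorial : ℝ)⁻¹ * (n.descFactorial ij.2 / (ij.2.factorial : ℝ) ^ 2)
      = (n + 1).ascFactorial N / (N.factorial : ℝ) ^ 2 := by
  have hterm : ∀ ij ∈ antidiagonal N,
      (ij.1.factorial : ℝ)⁻¹ * (n.descFactorial ij.2 / (ij.2.factorial : ℝ) ^ 2)
        = (N.choose ij.1 * n.choose ij.2 : ℕ) / (N.factorial : ℝ) := by
    rintro ⟨i, j⟩ hij
    rw [HasAntidiagonal.mem_antidiagonal] at hij
    subst hij
    rw [Nat.descFactorial_eq_factorial_mul_choose, Nat.choose_symm_add,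
      ← Nat.add_choose_mul_factorial_mul_factorial]
    have : ((i + j).choose j : ℝ) ≠ 0 := mod_cast (Nat.choose_pos (Nat.le_add_left j i)).ne'
    push_cast
    field_simp
  rw [sum_congr rfl hterm, ← sum_div, ← Nat.cast_sum, ← Nat.add_choose_eq,
    Nat.ascFactorial_eq_factorial_mul_choose, add_comm n N]
  push_cast
  field_simp

theorem tsum_rf_mul_pow_div_factorial_sq (n : ℕ) (z : ℝ) :
    ∑' i : ℕ, rf ((n + 1 : ℕ) : ℝ) i * z ^ i / (i.factorial : ℝ) ^ 2
      = Real.exp z * ∑ l ∈ range (n + 1), n.descFactorial l * z ^ l / (l.factorial : ℝ) ^ 2 := by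
  set f : ℕ → ℝ := fun i => z ^ i / i.factorial
  set g : ℕ → ℝ := fun j => n.descFactorial j * z ^ j / (j.factorial : ℝ) ^ 2
  have hg : ∀ j ∉ range (n + 1), g j = 0 := fun j hj => by
    rw [mem_range, not_lt] at hj
    simp [g, Nat.descFactorial_eq_zero_iff_lt.mpr hj]
  have hf_norm : Summable fun i => ‖f i‖ :=
    (Real.summable_pow_div_factorial |z|).congr fun i => by simp [f]
  have hg_norm : Summable fun j => ‖g j‖ :=
    summable_of_ne_finset_zero (s := range (n + 1)) fun j hj => by rw [hg j hj, norm_zero]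
  rw [Real.exp_eq_exp_ℝ, NormedSpace.exp_eq_tsum_div, ← tsum_eq_sum (L := .unconditional ℕ) hg,
    tsum_mul_tsum_eq_tsum_sum_antidiagonal_of_summable_norm hf_norm hg_norm]
  refine tsum_congr fun N => ?_
  have hterm : ∀ ij ∈ antidiagonal N, f ij.1 * g ij.2
      = z ^ N * ((ij.1.factorial : ℝ)⁻¹ * (n.descFactorial ij.2 / (ij.2.factorial : ℝ) ^ 2)) := by
    rintro ⟨i, j⟩ hij
    rw [HasAntidiagonal.mem_antidiagonal] at hij
    simp only [f, g, ← hij, pow_add]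
    ring
  rw [sum_congr rfl hterm, ← mul_sum, sum_antidiagonal_inv_factorial_mul_descFactorial, rf_natCast_s8]
  ring

lemma srDensity_succ_of_pos (α β δ : ℝ) (n : ℕ) {t : ℝ} (ht : 0 < t) :
    srDensity α β δ (n + 1) t = α * Real.exp (-((β - δ) * t)) *
      ∑ l ∈ range (n + 1), n.descFactorial l * (δ * t) ^ l / (l.factorial : ℝ) ^ 2 := by
  rw [srDensity, if_pos ht, tsum_rf_mul_pow_div_factorial_sq, ← mul_assoc, mul_assoc α,
    ← Real.exp_add]
  ring_nf

lemma mul_srDensity_mul_gammaDensity (α β δ : ℝ) (n : ℕ) (k η : ℝ) {c x y : ℝ}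
    (hc : 0 < c) (hx : 0 < x) (hy : 0 < y) :
    y * srDensity α β δ (n + 1) (x * y / c) * gammaDensity k η y
      = ∑ l ∈ range (n + 1),
          α / (Real.Gamma k * η ^ k) * (n.descFactorial l / (l.factorial : ℝ) ^ 2)
            * (δ * x / c) ^ l
            * (y ^ (((l : ℝ) + k + 1) - 1) * Real.exp (-(((β - δ) * x / c + 1 / η) * y))) := by
  rw [srDensity_succ_of_pos _ _ _ _ (by positivity), gammaDensity, if_pos hy]
  simp only [mul_sum, sum_mul]
  refine sum_congr rfl fun l _ => ?_
  have hexp : Real.exp (-((β - δ) * (x * y / c))) * Real.exp (-y / η)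
      = Real.exp (-(((β - δ) * x / c + 1 / η) * y)) := by
    rw [← Real.exp_add]
    ring_nf
  have hpow : y ^ (((l : ℝ) + k + 1) - 1) = y * y ^ l * y ^ (k - 1) := by
    rw [← Real.rpow_natCast, ← Real.rpow_one_add' hy.le (by positivity), ← Real.rpow_add hy]
    ring_nf
  rw [← hexp, hpow]
  ring

lemma integral_sum_mul_rpow_mul_exp_neg_mul_Ioi {ι : Type*} (S : Finset ι) (C a : ι → ℝ)
    (ha : ∀ i ∈ S, 0 < a i) {s : ℝ} (hs : 0 < s) :
    ∫ y in Set.Ioi (0 : ℝ), ∑ i ∈ S, C i * (y ^ (a i - 1) * Real.exp (-(s * y)))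
      = ∑ i ∈ S, C i * (Real.Gamma (a i) * s ^ (-a i)) := by
  rw [integral_finsetSum]
  · refine sum_congr rfl fun i hi => ?_
    rw [integral_const_mul, Real.integral_rpow_mul_exp_neg_mul_Ioi (ha i hi) hs, one_div,
      Real.inv_rpow hs.le, ← Real.rpow_neg hs.le, mul_comm (s ^ _)]
  · intro i hi
    have h := integrableOn_rpow_mul_exp_neg_mul_rpow (by linarith [ha i hi] : -1 < a i - 1)
      one_pos hs
    simp only [Real.rpow_one, neg_mul] at h
    exact Integrable.const_mul h _

theorem stmt_8_general (b Ωp α β δ : ℝ) (m : ℕ) (k η c : ℝ)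
    (hb : 0 < b) (hΩ : 0 < Ωp) (hm : 0 < m)
    (hβ : β = 1 / (2 * b))
    (hδ : δ = Ωp / (2 * b * (2 * b * m + Ωp)))
    (hk : 0 < k) (hη : 0 < η) (hc : 0 < c)
    (x : ℝ) (hx : 0 < x) :
    ∫ y in Set.Ioi (0 : ℝ), y * srDensity α β δ m (x * y / c) * gammaDensity k η y
      = α / (Real.Gamma k * η ^ k) *
          ∑ l ∈ Finset.range m,
            ((-1 : ℝ) ^ l * rf (1 - (m : ℝ)) l / ((l.factorial : ℝ)) ^ 2)
              * (δ * x / c) ^ l * Real.Gamma ((l : ℝ) + k + 1)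
              * ((β - δ) * x / c + 1 / η) ^ (-((l : ℝ) + k + 1)) := by
  obtain ⟨n, rfl⟩ := Nat.exists_eq_add_one_of_ne_zero hm.ne'
  have hβδ : 0 < β - δ := by
    have : β - δ = (n + 1 : ℕ) / (2 * b * (n + 1 : ℕ) + Ωp) := by
      rw [hβ, hδ]
      field_simp
      ring
    rw [this]
    positivity
  have hs : 0 < (β - δ) * x / c + 1 / η := by positivity
  rw [setIntegral_congr_fun measurableSet_Ioi fun y hy =>
      mul_srDensity_mul_gammaDensity α β δ n k η hc hx hy,
    integral_sum_mul_rpow_mul_exp_neg_mul_Ioi _ _ _ (fun l _ => by positivity) hs, mul_sum]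
  refine sum_congr rfl fun l _ => ?_
  have hrf : (-1) ^ l * rf (1 - ((n + 1 : ℕ) : ℝ)) l = n.descFactorial l := by
    rw [show 1 - ((n + 1 : ℕ) : ℝ) = -n by push_cast; ring, rf_neg_natCast, ← mul_assoc,
      ← mul_pow, neg_one_mul, neg_neg, one_pow, one_mul]
  rw [hrf]
  ring

/-- For the shadowed-Rician density `f_H`, the Gamma(k, η) density `g`, and `c > 0`, for
every `x > 0`, `∫₀^∞ y f_H(xy/c) g(y) dy` equals the stated finite sum (the density of the
ratio `cH/I` in polynomial-times-power form). -/
theorem stmt_8 (b Ωp α β δ : ℝ) (m : ℕ) (k η c : ℝ)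
    (hb : 0 < b) (hΩ : 0 < Ωp) (hm : 0 < m)
    (hα : α = 1 / (2 * b) * ((2 * b * m) / (2 * b * m + Ωp)) ^ m)
    (hβ : β = 1 / (2 * b))
    (hδ : δ = Ωp / (2 * b * (2 * b * m + Ωp)))
    (hk : 0 < k) (hη : 0 < η) (hc : 0 < c)
    (x : ℝ) (hx : 0 < x) :
    ∫ y in Set.Ioi (0 : ℝ), y * srDensity α β δ m (x * y / c) * gammaDensity k η y
      = α / (Real.Gamma k * η ^ k) *
          ∑ l ∈ Finset.range m,
            ((-1 : ℝ) ^ l * rf (1 - (m : ℝ)) l / ((l.factorial : ℝ)) ^ 2)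
              * (δ * x / c) ^ l * Real.Gamma ((l : ℝ) + k + 1)
              * ((β - δ) * x / c + 1 / η) ^ (-((l : ℝ) + k + 1)) :=
  stmt_8_general b Ωp α β δ m k η c hb hΩ hm hβ hδ hk hη hc x hx
end

section
/- Let α, c > 0, let m be a positive integer, let 0 < δ < β, let k > 0, η > 0, let (c_l)_{l} be given by c_l = (−1)^l (1−m)_l / (l!)², and define h(x) = (α/(Γ(k)η^k)) Σ_{l=0}^{m−1} c_l (δx/c)^l Γ(l+k+1) ((β−δ)x/c + 1/η)^{−(l+k+1)} for x > 0. If 0 ≤ ζ_l < ζ_u and η(β−δ)ζ_u/c < 1, then ∫_{ζ_l}^{ζ_u} x h(x) dx = (α/(Γ(k)η^k)) Σ_{l=0}^{m−1} c_l (δ/c)^l Γ(l+k+1) η^{l+k+1} (1/(l+2)) [ (ζ_u)^{l+2} G_l(ζ_u) − (ζ_l)^{l+2} G_l(ζ_l) ], where G_l(ζ) = Σ_{n=0}^∞ [(l+k+1)_n (l+2)_n / ((l+3)_n n!)] (−η(β−δ)ζ/c)^n. -/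
/-!
With `a = η(β-δ)/c` we have `(β-δ)x/c + 1/η = (1 + a x)/η`, so each summand of `x h(x)` is a
constant multiple of `x^(l+1) (1 + a x)^(-s)` with `s = l + k + 1`. On `[ζl, ζu]` we have
`|a x| ≤ a ζu < 1`, so the binomial series `(1 + a x)^(-s) = ∑ (s)_n / n! (-a x)^n` is dominated
by a summable constant series and may be integrated term by term. The `n`-th term integrates to
`(s)_n / n! (-a)^n ζ^(l+2+n) / (l+2+n)` at the endpoints, and the identity
`(l+2)_n / (l+3)_n = (l+2) / (l+2+n)` recognises the resulting series as
`ζ^(l+2) / (l+2) · ₂F₁(s, l+2; l+3; -a ζ)`.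
-/

open Polynomial Set intervalIntegral

/-- Gauss's series `₂F₁(a, b; c; z)`; as a `tsum` it is `0` wherever the series diverges. -/
noncomputable def hyp2F1 (a b c z : ℝ) : ℝ :=
  ∑' n : ℕ, rf a n * rf b n / (rf c n * n.factorial) * z ^ n

lemma rf_eq_ascPochhammer_eval (a : ℝ) (n : ℕ) : rf a n = (ascPochhammer ℝ n).eval a := by
  induction n with
  | zero => simp [rf]
  | succ n ih => rw [rf, ih, ascPochhammer_succ_eval]

lemma rf_pos {a : ℝ} (ha : 0 < a) (n : ℕ) : 0 < rf a n := by
  induction n with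
  | zero => exact one_pos
  | succ n ih => exact mul_pos ih (by positivity)

lemma rf_mul_add (b : ℝ) (n : ℕ) : rf b n * (b + n) = b * rf (b + 1) n := by
  induction n with
  | zero => simp [rf]
  | succ n ih =>
    simp only [rf, Nat.cast_succ]
    linear_combination (b + n + 1) * ih

lemma rf_div_rf_add_one {b : ℝ} (hb : 0 < b) (n : ℕ) :
    rf b n / rf (b + 1) n = b / (b + n) := by
  rw [div_eq_div_iff (rf_pos (by linarith) n).ne' (by positivity), rf_mul_add]

lemma ring_choose_add_sub_one (a : ℝ) (n : ℕ) :
    Ring.choose (a + n - 1) n = rf a n / n.factorial := by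
  rw [Ring.choose, show a + n - 1 - n + 1 = a by ring, rf_eq_ascPochhammer_eval,
    eq_div_iff (by positivity), ← ascPochhammer_smeval_eq_eval,
    ← Ring.factorial_nsmul_multichoose_eq_ascPochhammer, nsmul_eq_mul, mul_comm]

lemma mem_eball_of_abs_lt_one {t : ℝ} (ht : |t| < 1) : t ∈ Metric.eball (0 : ℝ) 1 := by
  rwa [mem_eball_zero_iff, Real.enorm_eq_ofReal_abs, ENNReal.ofReal_lt_one]

lemma hasSum_rf_div_factorial_mul_pow (a : ℝ) {t : ℝ} (ht : |t| < 1) :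
    HasSum (fun n ↦ rf a n / n.factorial * t ^ n) ((1 - t) ^ (-a)) := by
  have := (Real.one_div_one_sub_rpow_hasFPowerSeriesOnBall_zero a).hasSum
    (mem_eball_of_abs_lt_one ht)
  simp only [FormalMultilinearSeries.ofScalars_apply_eq, zero_add, smul_eq_mul,
    ring_choose_add_sub_one] at this
  rwa [Real.rpow_neg (by linarith [(abs_lt.1 ht).2]), inv_eq_one_div]

lemma summable_norm_rf_div_factorial_mul_pow (a : ℝ) {t : ℝ} (ht : |t| < 1) :
    Summable (fun n ↦ ‖rf a n / n.factorial * t ^ n‖) := by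
  have hr := (Real.one_div_one_sub_rpow_hasFPowerSeriesOnBall_zero a).r_le
  simpa [FormalMultilinearSeries.ofScalars_apply_eq, ring_choose_add_sub_one, mul_comm] using
    FormalMultilinearSeries.summable_norm_apply _
      (Metric.eball_subset_eball hr (mem_eball_of_abs_lt_one ht))

lemma hasSum_pow_mul_hyp2F1 (s a : ℝ) (l : ℕ) {ζ : ℝ} (hζ : |a * ζ| < 1) :
    HasSum (fun n : ℕ ↦ rf s n / n.factorial * (-a) ^ n * (ζ ^ (l + 2 + n) / (l + 2 + n)))
      (ζ ^ (l + 2) / (l + 2) * hyp2F1 s (l + 2) (l + 3) (-(a * ζ))) := by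
  have hb : (0 : ℝ) < l + 2 := by positivity
  have hratio (n : ℕ) : rf (l + 2) n / rf (l + 3) n = (l + 2) / (l + 2 + n) := by
    rw [← rf_div_rf_add_one hb]; ring_nf
  have hterm (n : ℕ) : rf s n * rf (l + 2) n / (rf (l + 3) n * n.factorial) * (-(a * ζ)) ^ n
      = (l + 2) / (l + 2 + n) * (rf s n / n.factorial * (-(a * ζ)) ^ n) := by
    rw [← hratio]; ring
  have hsum : Summable (fun n : ℕ ↦
      rf s n * rf (l + 2) n / (rf (l + 3) n * n.factorial) * (-(a * ζ)) ^ n) := by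
    refine .of_norm_bounded (summable_norm_rf_div_factorial_mul_pow s (by rwa [abs_neg])) ?_
    intro n
    rw [hterm, norm_mul]
    refine mul_le_of_le_one_left (norm_nonneg _) ?_
    rw [Real.norm_eq_abs, abs_of_pos (by positivity), div_le_one (by positivity)]
    linarith [n.cast_nonneg (α := ℝ)]
  refine (hsum.hasSum.mul_left (ζ ^ (l + 2) / (l + 2))).congr_fun fun n ↦ ?_
  rw [hterm, pow_add, neg_mul_eq_neg_mul, mul_pow]
  field_simp

lemma integral_pow_mul_one_add_rpow_neg (s a : ℝ) (l : ℕ) {ζl ζu : ℝ} (h0 : 0 ≤ ζl)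
    (hlu : ζl ≤ ζu) (hb : |a| * ζu < 1) :
    ∫ x in ζl..ζu, x ^ (l + 1) * (1 + a * x) ^ (-s)
      = ζu ^ (l + 2) / (l + 2) * hyp2F1 s (l + 2) (l + 3) (-(a * ζu))
        - ζl ^ (l + 2) / (l + 2) * hyp2F1 s (l + 2) (l + 3) (-(a * ζl)) := by
  have hsmall {x : ℝ} (hx : x ∈ Icc 0 ζu) : |a * x| < 1 := by
    rw [abs_mul, abs_of_nonneg hx.1]
    exact (mul_le_mul_of_nonneg_left hx.2 (abs_nonneg a)).trans_lt hb
  have hIoc : uIoc ζl ζu ⊆ Icc 0 ζu := by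
    rw [uIoc_of_le hlu]; exact fun x hx ↦ ⟨h0.trans hx.1.le, hx.2⟩
  set F : ℕ → ℝ → ℝ := fun n x ↦ rf s n / n.factorial * (-a) ^ n * x ^ (l + 1 + n)
  have hF_lim {x : ℝ} (hx : x ∈ Icc 0 ζu) :
      HasSum (fun n ↦ F n x) (x ^ (l + 1) * (1 + a * x) ^ (-s)) := by
    have := (hasSum_rf_div_factorial_mul_pow s (t := -(a * x))
      (by rw [abs_neg]; exact hsmall hx)).mul_left (x ^ (l + 1))
    rw [sub_neg_eq_add] at this
    refine this.congr_fun fun n ↦ ?_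
    simp only [F, pow_add, neg_mul_eq_neg_mul, mul_pow]
    ring
  have hF_bound (n : ℕ) {x : ℝ} (hx : x ∈ Icc 0 ζu) :
      ‖F n x‖ ≤ ‖rf s n / n.factorial * (-(a * ζu)) ^ n‖ * ζu ^ (l + 1) := by
    have hu : 0 ≤ ζu := hx.1.trans hx.2
    have hxu : |x| ≤ ζu := by rw [abs_of_nonneg hx.1]; exact hx.2
    simp only [F, norm_mul, norm_pow, norm_neg, Real.norm_eq_abs, abs_of_nonneg hu, pow_add]
    calc _ = |rf s n / n.factorial| * |a| ^ n * (|x| ^ (l + 1) * |x| ^ n) := by ring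
      _ ≤ |rf s n / n.factorial| * |a| ^ n * (ζu ^ (l + 1) * ζu ^ n) := by gcongr
      _ = _ := by ring
  have hF_integral (n : ℕ) : ∫ x in ζl..ζu, F n x
      = rf s n / n.factorial * (-a) ^ n * (ζu ^ (l + 2 + n) / (l + 2 + n))
        - rf s n / n.factorial * (-a) ^ n * (ζl ^ (l + 2 + n) / (l + 2 + n)) := by
    simp only [F, integral_const_mul, integral_pow]
    rw [show l + 1 + n + 1 = l + 2 + n by ring]
    push_cast
    ring
  have hint := hasSum_integral_of_dominated_convergence (μ := MeasureTheory.volume)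
    (fun n _ ↦ ‖rf s n / n.factorial * (-(a * ζu)) ^ n‖ * ζu ^ (l + 1))
    (fun n ↦ (by fun_prop : Continuous (F n)).aestronglyMeasurable)
    (fun n ↦ .of_forall fun x hx ↦ hF_bound n (hIoc hx))
    (.of_forall fun _ _ ↦ (summable_norm_rf_div_factorial_mul_pow s
      (by rw [abs_neg]; exact hsmall ⟨h0.trans hlu, le_rfl⟩)).mul_right _)
    intervalIntegrable_const
    (.of_forall fun x hx ↦ hF_lim (hIoc hx))
  simp only [hF_integral] at hint
  exact hint.unique ((hasSum_pow_mul_hyp2F1 s a l (hsmall ⟨h0.trans hlu, le_rfl⟩)).sub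
    (hasSum_pow_mul_hyp2F1 s a l (hsmall ⟨h0, hlu⟩)))

lemma intervalIntegrable_pow_mul_one_add_rpow (s a : ℝ) (l : ℕ) {ζl ζu : ℝ} (h0 : 0 ≤ ζl)
    (hlu : ζl ≤ ζu) (ha : 0 ≤ a) :
    IntervalIntegrable (fun x ↦ x ^ (l + 1) * (1 + a * x) ^ s) MeasureTheory.volume ζl ζu := by
  refine ContinuousOn.intervalIntegrable fun x hx ↦ ?_
  rw [uIcc_of_le hlu] at hx
  have : 0 < 1 + a * x := by nlinarith [hx.1]
  exact (continuousAt_id.pow _ |>.mul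
    ((continuousAt_const.add (continuousAt_const.mul continuousAt_id)).rpow_const
      (.inl this.ne'))).continuousWithinAt

lemma add_one_div_rpow_neg {η : ℝ} (hη : 0 < η) {y : ℝ} (hy : 0 ≤ 1 + η * y) (s : ℝ) :
    (y + 1 / η) ^ (-s) = η ^ s * (1 + η * y) ^ (-s) := by
  rw [show y + 1 / η = (1 + η * y) * η⁻¹ by field_simp; ring,
    Real.mul_rpow hy (inv_nonneg.2 hη.le), Real.inv_rpow hη.le, Real.rpow_neg hη.le, inv_inv,
    mul_comm]

theorem stmt_10_general (α c : ℝ) (m : ℕ) (β δ k η : ℝ)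
    (hc : 0 < c) (hδβ : δ < β)
    (hη : 0 < η)
    (cl : ℕ → ℝ)
    (h : ℝ → ℝ)
    (hh : ∀ x : ℝ, 0 < x →
      h x = α / (Real.Gamma k * η ^ k) *
        ∑ l ∈ Finset.range m,
          cl l * (δ * x / c) ^ l * Real.Gamma ((l : ℝ) + k + 1)
            * ((β - δ) * x / c + 1 / η) ^ (-((l : ℝ) + k + 1)))
    (ζl ζu : ℝ) (h0 : 0 ≤ ζl) (hlu : ζl < ζu) (hb : η * (β - δ) * ζu / c < 1)
    (G : ℕ → ℝ → ℝ)
    (hG : ∀ (l : ℕ) (ζ : ℝ),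
      G l ζ = ∑' n : ℕ,
        rf ((l : ℝ) + k + 1) n * rf ((l : ℝ) + 2) n
          / (rf ((l : ℝ) + 3) n * (n.factorial : ℝ))
          * (-(η * (β - δ) * ζ / c)) ^ n) :
    ∫ x in ζl..ζu, x * h x
      = α / (Real.Gamma k * η ^ k) *
          ∑ l ∈ Finset.range m,
            cl l * (δ / c) ^ l * Real.Gamma ((l : ℝ) + k + 1) * η ^ ((l : ℝ) + k + 1)
              * (1 / ((l : ℝ) + 2))
              * (ζu ^ (l + 2) * G l ζu - ζl ^ (l + 2) * G l ζl) := by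
  set a := η * (β - δ) / c with ha_def
  have ha : 0 < a := div_pos (mul_pos hη (sub_pos.2 hδβ)) hc
  have haζ (ζ : ℝ) : η * (β - δ) * ζ / c = a * ζ := by rw [ha_def]; ring
  have hGa (l : ℕ) (ζ : ℝ) : G l ζ = hyp2F1 (l + k + 1) (l + 2) (l + 3) (-(a * ζ)) := by
    rw [hG, hyp2F1, haζ]
  set K := α / (Real.Gamma k * η ^ k)
  let C : ℕ → ℝ := fun l ↦ cl l * (δ / c) ^ l * Real.Gamma (l + k + 1) * η ^ ((l : ℝ) + k + 1)
  have hxh : ∀ x ∈ Ioc ζl ζu, x * h x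
      = K * ∑ l ∈ Finset.range m, C l * (x ^ (l + 1) * (1 + a * x) ^ (-((l : ℝ) + k + 1))) := by
    intro x hx
    rw [hh x (h0.trans_lt hx.1), Finset.mul_sum, Finset.mul_sum, Finset.mul_sum]
    refine Finset.sum_congr rfl fun l _ ↦ ?_
    have hax : η * ((β - δ) * x / c) = a * x := by rw [ha_def]; ring
    rw [add_one_div_rpow_neg hη (by rw [hax]; nlinarith [hx.1]), hax]
    ring
  rw [integral_congr_ae (.of_forall fun x hx ↦ hxh x (by rwa [uIoc_of_le hlu.le] at hx)),
    integral_const_mul, integral_finsetSum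
      fun l _ ↦ (intervalIntegrable_pow_mul_one_add_rpow _ a l h0 hlu.le ha.le).const_mul _]
  congr 1
  refine Finset.sum_congr rfl fun l _ ↦ ?_
  rw [integral_const_mul,
    integral_pow_mul_one_add_rpow_neg _ a l h0 hlu.le (by rwa [abs_of_pos ha, ← haζ]), hGa, hGa]
  simp only [C]
  ring

/-- For the ratio density `h` written in its finite-sum (polynomial-times-power) form, if
`0 ≤ ζ_l < ζ_u` and `η(β-δ)ζ_u/c < 1`, then `∫_{ζ_l}^{ζ_u} x h(x) dx` equals the stated
finite sum of Gauss hypergeometric series evaluations. -/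
theorem stmt_10 (α c : ℝ) (m : ℕ) (β δ k η : ℝ)
    (hα : 0 < α) (hc : 0 < c) (hm : 0 < m) (hδ : 0 < δ) (hδβ : δ < β)
    (hk : 0 < k) (hη : 0 < η)
    (cl : ℕ → ℝ)
    (hcl : ∀ l : ℕ, cl l = (-1 : ℝ) ^ l * rf (1 - (m : ℝ)) l / ((l.factorial : ℝ)) ^ 2)
    (h : ℝ → ℝ)
    (hh : ∀ x : ℝ, 0 < x →
      h x = α / (Real.Gamma k * η ^ k) *
        ∑ l ∈ Finset.range m,
          cl l * (δ * x / c) ^ l * Real.Gamma ((l : ℝ) + k + 1)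
            * ((β - δ) * x / c + 1 / η) ^ (-((l : ℝ) + k + 1)))
    (ζl ζu : ℝ) (h0 : 0 ≤ ζl) (hlu : ζl < ζu) (hb : η * (β - δ) * ζu / c < 1)
    (G : ℕ → ℝ → ℝ)
    (hG : ∀ (l : ℕ) (ζ : ℝ),
      G l ζ = ∑' n : ℕ,
        rf ((l : ℝ) + k + 1) n * rf ((l : ℝ) + 2) n
          / (rf ((l : ℝ) + 3) n * (n.factorial : ℝ))
          * (-(η * (β - δ) * ζ / c)) ^ n) :
    ∫ x in ζl..ζu, x * h x
      = α / (Real.Gamma k * η ^ k) *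
          ∑ l ∈ Finset.range m,
            cl l * (δ / c) ^ l * Real.Gamma ((l : ℝ) + k + 1) * η ^ ((l : ℝ) + k + 1)
              * (1 / ((l : ℝ) + 2))
              * (ζu ^ (l + 2) * G l ζu - ζl ^ (l + 2) * G l ζl) :=
  stmt_10_general α c m β δ k η hc hδβ hη cl h hh ζl ζu h0 hlu hb G hG
end

section
/- Fix θ > 0, n > 0, κ ∈ ℝ, and let Ψ, ζ_l, ζ_u be the clamped-linear approximation data with ζ_l ≥ 0. Let X be a nonnegative real random variable and K > 0 with Kζ_u ≤ 1 such that P(X ≤ x) = Kx for all x ∈ [0, ζ_u]. Then E[Ψ(X)] = Kκ. (Exact evaluation of the approximated decoding error probability under a CDF that is linear on the relevant interval, as in the high-SNR asymptotics.) -/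
/-!
Layer cake: since `0 ≤ Ψ ≤ 1`, `E[Ψ(X)] = ∫₀¹ P(Ψ(X) ≥ t) dt`. For `t ∈ (0, 1]` the event
`Ψ(X) ≥ t` is `X ≤ κ + (1 - 2t)/(2θ√n)`, a threshold lying in `[ζ_l, ζ_u] ⊆ [0, ζ_u]`, so its
probability is `K` times the threshold, which is affine in `t` with mean `κ` over `[0, 1]`.
-/

open MeasureTheory

/-- Clamped-linear approximation of the Q-function: given `θ > 0`, `n > 0`, `κ ∈ ℝ`,
`Ψ(x) = 1` for `x ≤ ζ_l`, `Ψ(x) = 1/2 - θ√n (x - κ)` for `ζ_l < x < ζ_u`, `Ψ(x) = 0` for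
`x ≥ ζ_u`, where `ζ_l = κ - 1/(2θ√n)` and `ζ_u = κ + 1/(2θ√n)`. -/
noncomputable def clampLin (θ n κ : ℝ) (x : ℝ) : ℝ :=
  if x ≤ κ - 1 / (2 * θ * Real.sqrt n) then 1
  else if x < κ + 1 / (2 * θ * Real.sqrt n) then 1 / 2 - θ * Real.sqrt n * (x - κ)
  else 0

open Set

section
variable {θ n : ℝ} (κ : ℝ)

theorem measurable_clampLin : Measurable (clampLin θ n κ) :=
  Measurable.ite (measurableSet_le measurable_id measurable_const) measurable_const <|
    Measurable.ite (measurableSet_lt measurable_id measurable_const) (by fun_prop) measurable_const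

variable (hθ : 0 < θ) (hn : 0 < n)
include hθ hn

theorem clampLin_mem_Icc (x : ℝ) : clampLin θ n κ x ∈ Icc 0 1 := by
  have hc : 0 < θ * √n := mul_pos hθ (Real.sqrt_pos.mpr hn)
  have hd : θ * √n * (1 / (2 * θ * √n)) = 1 / 2 := by field_simp
  unfold clampLin
  split_ifs with hl hu
  · simp
  · rw [not_le] at hl
    have hlow := mul_lt_mul_of_pos_left (show κ - x < 1 / (2 * θ * √n) by linarith) hc
    have hupp := mul_lt_mul_of_pos_left (show x - κ < 1 / (2 * θ * √n) by linarith) hc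
    constructor <;> nlinarith
  · simp

theorem le_clampLin_iff {t : ℝ} (ht : t ∈ Ioc 0 1) (x : ℝ) :
    t ≤ clampLin θ n κ x ↔ x ≤ κ + (1 - 2 * t) / (2 * θ * √n) := by
  have hc : 0 < 2 * θ * √n := by have := Real.sqrt_pos.mpr hn; positivity
  obtain ⟨ht0, ht1⟩ := ht
  unfold clampLin
  split_ifs with hl hu
  · refine iff_of_true ht1 (hl.trans ?_)
    rw [sub_eq_add_neg, ← neg_div]
    gcongr
    linarith
  · rw [← sub_le_iff_le_add', le_div_iff₀ hc]
    constructor <;> intro h <;> nlinarith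
  · refine iff_of_false (by linarith) ?_
    rw [not_lt] at hu
    intro h
    have : (1 - 2 * t) / (2 * θ * √n) < 1 / (2 * θ * √n) := by gcongr; linarith
    linarith

end

theorem integral_eq_integral_Ioc_measureReal_le_of_mem_Icc {Ω : Type*} [MeasurableSpace Ω]
    {μ : Measure Ω} [IsFiniteMeasure μ] {f : Ω → ℝ} (hf : AEStronglyMeasurable f μ)
    (h01 : ∀ ω, f ω ∈ Icc 0 1) :
    ∫ ω, f ω ∂μ = ∫ t in Ioc 0 1, μ.real {ω | t ≤ f ω} := by
  refine Integrable.integral_eq_integral_Ioc_meas_le ?_ (.of_forall fun ω ↦ (h01 ω).1)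
    (.of_forall fun ω ↦ (h01 ω).2)
  refine (integrable_const (1 : ℝ)).mono' hf (.of_forall fun ω ↦ ?_)
  rw [Real.norm_eq_abs, abs_of_nonneg (h01 ω).1]
  exact (h01 ω).2

theorem stmt_12_general {Ωs : Type*} [MeasurableSpace Ωs] (μ : Measure Ωs) [IsProbabilityMeasure μ]
    (θ n κ ζl ζu : ℝ) (hθ : 0 < θ) (hn : 0 < n)
    (hζl : ζl = κ - 1 / (2 * θ * Real.sqrt n))
    (hζu : ζu = κ + 1 / (2 * θ * Real.sqrt n))
    (hζl0 : 0 ≤ ζl)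
    (X : Ωs → ℝ) (hXm : Measurable X)
    (K : ℝ)
    (hcdf : ∀ x : ℝ, 0 ≤ x → x ≤ ζu → (μ {ω | X ω ≤ x}).toReal = K * x) :
    ∫ ω, clampLin θ n κ (X ω) ∂μ = K * κ := by
  set d := 1 / (2 * θ * √n) with hd
  have hd0 : 0 < d := by have := Real.sqrt_pos.mpr hn; positivity
  have hlevel : ∀ t ∈ Ioc (0 : ℝ) 1,
      μ.real {ω | t ≤ clampLin θ n κ (X ω)} = K * (κ + (1 - 2 * t) * d) := by
    intro t ht
    have hx : κ + (1 - 2 * t) * d = κ + (1 - 2 * t) / (2 * θ * √n) := by rw [hd]; ring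
    simp_rw [le_clampLin_iff κ hθ hn ht, ← hx]
    apply hcdf <;> nlinarith [ht.1, ht.2]
  calc ∫ ω, clampLin θ n κ (X ω) ∂μ
      = ∫ t in Ioc 0 1, K * (κ + (1 - 2 * t) * d) := by
        rw [integral_eq_integral_Ioc_measureReal_le_of_mem_Icc
          (f := fun ω ↦ clampLin θ n κ (X ω)) ((measurable_clampLin κ).comp hXm).aestronglyMeasurable
          (fun ω ↦ clampLin_mem_Icc κ hθ hn (X ω))]
        exact setIntegral_congr_fun measurableSet_Ioc hlevel
    _ = K * κ := by
        have hlin : (fun t : ℝ ↦ K * (κ + (1 - 2 * t) * d)) =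
            fun t ↦ K * (κ + d) - 2 * K * d * t := by
          ext t; ring
        rw [← intervalIntegral.integral_of_le zero_le_one, hlin, intervalIntegral.integral_sub
          intervalIntegrable_const (intervalIntegral.intervalIntegrable_id.const_mul _),
          intervalIntegral.integral_const, intervalIntegral.integral_const_mul, integral_id]
        ring

/-- If the CDF of a nonnegative random variable `X` is linear with slope `K` on `[0, ζ_u]`
(with `Kζ_u ≤ 1`) and `ζ_l ≥ 0`, then `E[Ψ(X)] = Kκ`: exact evaluation of the approximated
decoding error probability under a CDF that is linear on the relevant interval (high-SNR
asymptotics). -/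
theorem stmt_12 {Ωs : Type*} [MeasurableSpace Ωs] (μ : Measure Ωs) [IsProbabilityMeasure μ]
    (θ n κ ζl ζu : ℝ) (hθ : 0 < θ) (hn : 0 < n)
    (hζl : ζl = κ - 1 / (2 * θ * Real.sqrt n))
    (hζu : ζu = κ + 1 / (2 * θ * Real.sqrt n))
    (hζl0 : 0 ≤ ζl)
    (X : Ωs → ℝ) (hXm : Measurable X) (hX0 : ∀ ω, 0 ≤ X ω)
    (K : ℝ) (hK : 0 < K) (hKζu : K * ζu ≤ 1)
    (hcdf : ∀ x : ℝ, 0 ≤ x → x ≤ ζu → (μ {ω | X ω ≤ x}).toReal = K * x) :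
    ∫ ω, clampLin θ n κ (X ω) ∂μ = K * κ :=
  stmt_12_general μ θ n κ ζl ζu hθ hn hζl hζu hζl0 X hXm K hcdf
end
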